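/- Let p and q be primes (or prime powers) and let F_p, F_q be finite fields of orders p and q respectively. Then the zero-divisor graph Γ(F_p × F_q) is isomorphic to the complete bipartite graph K_{p-1, q-1}, and consequently λ(Γ(F_p × F_q)) = p + q - 2. -/

import Mathlib

/-- An L(2,1)-labelling: adjacent vertices get labels differing by at least 2,
vertices at distance exactly two get different labels. -/
def IsL21Labelling {V : Type*} (G : SimpleGraph V) (f : V → ℕ) : Prop :=
  (∀ u v, G.Adj u v → 2 ≤ |(f u : ℤ) - (f v : ℤ)|) ∧
  ∀ u v, G.dist u v = 2 → f u ≠ f v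

/-- The lambda-number: the least `k` such that `G` has an L(2,1)-labelling with
labels in `{0, ..., k}` (equivalently, the minimum span). -/
noncomputable def lambdaNumber {V : Type*} (G : SimpleGraph V) : ℕ :=
  sInf {k | ∃ f : V → ℕ, IsL21Labelling G f ∧ ∀ v, f v ≤ k}

/-- The nonzero zero-divisors of `R`. -/
def zdVertices (R : Type*) [CommRing R] : Set R :=
  {x | x ≠ 0 ∧ ∃ y : R, y ≠ 0 ∧ x * y = 0}

/-- The zero-divisor graph of `R`: vertices are nonzero zero-divisors,
distinct `x, y` adjacent iff `x * y = 0`. -/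
def zdGraph (R : Type*) [CommRing R] : SimpleGraph (zdVertices R) where
  Adj x y := x ≠ y ∧ (x : R) * (y : R) = 0
  symm := by
    constructor
    rintro x y ⟨h1, h2⟩
    exact ⟨h1.symm, by rwa [mul_comm] at h2⟩
  loopless := by constructor; rintro x ⟨h, _⟩; exact h rfl

/-- Beck's zero-divisor graph of `R`: vertices are all of `R`,
distinct `x, y` adjacent iff `x * y = 0`. -/
def beckGraph (R : Type*) [CommRing R] : SimpleGraph R where
  Adj x y := x ≠ y ∧ x * y = 0
  symm := by
    constructor
    rintro x y ⟨h1, h2⟩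
    exact ⟨h1.symm, by rwa [mul_comm] at h2⟩
  loopless := by constructor; rintro x ⟨h, _⟩; exact h rfl

/-! In a product `R × S` of domains, `(a, b)` is a nonzero zero-divisor iff exactly one
coordinate vanishes, and `(a, 0) (0, b) = 0` while `(a, 0) (a', 0) ≠ 0`, so the zero-divisor
graph is the complete bipartite graph on `R ∖ 0` and `S ∖ 0`.

In `K_{m,n}` any two distinct vertices are adjacent or at distance two, so an L(2,1)-labelling
is injective. Labelling one side `0, …, m - 1` and the other `m + 1, …, m + n` gives span
`m + n`, and conversely some value below the largest label is always skipped. -/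

open SimpleGraph

lemma two_le_abs_natCast_sub_iff {a b : ℕ} :
    2 ≤ |(a : ℤ) - b| ↔ a + 2 ≤ b ∨ b + 2 ≤ a := by
  rw [le_abs']
  omega

namespace SimpleGraph

variable {V W : Type*} {G : SimpleGraph V} {H : SimpleGraph W}

lemma Hom.edist_map_le (φ : G →g H) (u v : V) : H.edist (φ u) (φ v) ≤ G.edist u v :=
  le_iInf fun p => (edist_le (p.map φ)).trans_eq (by rw [Walk.length_map])

lemma Iso.dist_map (φ : G ≃g H) (u v : V) : H.dist (φ u) (φ v) = G.dist u v := by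
  have h := Hom.edist_map_le φ.symm.toHom (φ u) (φ v)
  simp only [RelHom.coeFn_mk, RelIso.coe_fn_toEquiv, RelIso.symm_apply_apply] at h
  exact congrArg ENat.toNat (le_antisymm (Hom.edist_map_le φ.toHom u v) h)

end SimpleGraph

section Labelling

variable {V W : Type*} {G : SimpleGraph V} {H : SimpleGraph W}

lemma IsL21Labelling.comp_iso {f : W → ℕ} (hf : IsL21Labelling H f) (φ : G ≃g H) :
    IsL21Labelling G (f ∘ φ) :=
  ⟨fun _ _ huv => hf.1 _ _ (φ.map_adj_iff.mpr huv),
    fun u v huv => hf.2 _ _ ((φ.dist_map u v).trans huv)⟩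

lemma lambdaNumber_congr (φ : G ≃g H) : lambdaNumber G = lambdaNumber H :=
  congrArg sInf <| Set.ext fun _ =>
    ⟨fun ⟨f, hf, hk⟩ => ⟨f ∘ φ.symm, hf.comp_iso φ.symm, fun _ => hk _⟩,
      fun ⟨f, hf, hk⟩ => ⟨f ∘ φ, hf.comp_iso φ, fun _ => hk _⟩⟩

lemma isL21Labelling_of_injective {f : V → ℕ} (hf : Function.Injective f)
    (hadj : ∀ u v, G.Adj u v → 2 ≤ |(f u : ℤ) - (f v : ℤ)|) : IsL21Labelling G f :=
  ⟨hadj, fun _ _ huv => hf.ne fun h => by simp [h] at huv⟩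

end Labelling

section CompleteBipartite

variable {V W : Type*}

lemma completeBipartiteGraph_adj_of_not_adj {u v w : V ⊕ W}
    (hvw : ¬(completeBipartiteGraph V W).Adj w v) (hwu : (completeBipartiteGraph V W).Adj w u) :
    (completeBipartiteGraph V W).Adj v u := by
  rcases u with _ | _ <;> rcases v with _ | _ <;> rcases w with _ | _ <;> simp_all

lemma exists_isL21Labelling_completeBipartiteGraph [Fintype V] [Fintype W] :
    ∃ f : V ⊕ W → ℕ, IsL21Labelling (completeBipartiteGraph V W) f ∧
      ∀ u, f u ≤ Fintype.card V + Fintype.card W := by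
  set eV := Fintype.equivFin V
  set eW := Fintype.equivFin W
  refine ⟨Sum.elim (fun a => eV a) (fun b => Fintype.card V + 1 + eW b),
    isL21Labelling_of_injective ?_ ?_, ?_⟩
  · rintro (a | b) (a' | b') h <;>
      simp only [Sum.elim_inl, Sum.elim_inr, Nat.add_left_cancel_iff] at h
    · simp [eV.injective (Fin.ext h)]
    · have := (eV a).isLt; omega
    · have := (eV a').isLt; omega
    · simp [eW.injective (Fin.ext h)]
  · intro u u' h
    rw [two_le_abs_natCast_sub_iff]
    rcases u with a | b <;> rcases u' with a' | b' <;>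
      simp only [completeBipartiteGraph_adj, Sum.isLeft_inl, Sum.isLeft_inr, Sum.isRight_inl,
        Sum.isRight_inr, Bool.false_eq_true, and_self, and_true, and_false, or_self, or_false,
        or_true, Sum.elim_inl, Sum.elim_inr] at h ⊢
    · have := (eV a).isLt; omega
    · have := (eV a').isLt; omega
  · rintro (a | b)
    · have := (eV a).isLt; simp only [Sum.elim_inl]; omega
    · have := (eW b).isLt; simp only [Sum.elim_inr]; omega

variable [Nonempty V] [Nonempty W]

lemma completeBipartiteGraph_exists_adj (w : V ⊕ W) :
    ∃ u, (completeBipartiteGraph V W).Adj w u := by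
  rcases w with _ | _
  · exact ⟨.inr (Classical.arbitrary W), by simp⟩
  · exact ⟨.inl (Classical.arbitrary V), by simp⟩

lemma completeBipartiteGraph_dist_eq_two {u v : V ⊕ W} (huv : u ≠ v)
    (hadj : ¬(completeBipartiteGraph V W).Adj u v) : (completeBipartiteGraph V W).dist u v = 2 := by
  obtain ⟨w, hw⟩ := completeBipartiteGraph_exists_adj (V := V) (W := W) u
  have hvw := completeBipartiteGraph_adj_of_not_adj hadj hw
  have h : (completeBipartiteGraph V W).edist u v = 2 :=
    edist_eq_two_iff.mpr ⟨huv, hadj, w, hw, hvw⟩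
  unfold SimpleGraph.dist
  rw [h]
  rfl

lemma IsL21Labelling.injective_of_completeBipartiteGraph {f : V ⊕ W → ℕ}
    (hf : IsL21Labelling (completeBipartiteGraph V W) f) : Function.Injective f := by
  intro u v huv
  by_contra hne
  by_cases hadj : (completeBipartiteGraph V W).Adj u v
  · simpa [huv] using hf.1 u v hadj
  · exact hf.2 u v (completeBipartiteGraph_dist_eq_two hne hadj) huv

variable [Fintype V] [Fintype W]

/-- Let `w` carry the largest label and `v` the largest label among the neighbours of `w`.
Then `f v + 1 ≤ k` is not a label: a vertex carrying it is neither a neighbour of `w`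
(by the choice of `v`) nor on the side of `w` (it would be adjacent to `v`). -/
lemma IsL21Labelling.card_add_card_le {f : V ⊕ W → ℕ} {k : ℕ}
    (hf : IsL21Labelling (completeBipartiteGraph V W) f) (hk : ∀ v, f v ≤ k) :
    Fintype.card V + Fintype.card W ≤ k := by
  classical
  set K := completeBipartiteGraph V W
  obtain ⟨w, hw⟩ := Finite.exists_max f
  obtain ⟨u, hwu⟩ := completeBipartiteGraph_exists_adj w
  obtain ⟨v, hwv, hv⟩ := Finset.exists_max_image ({u | K.Adj w u} : Finset (V ⊕ W)) f
    ⟨u, Finset.mem_filter.mpr ⟨Finset.mem_univ u, hwu⟩⟩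
  simp only [Finset.mem_filter, Finset.mem_univ, true_and] at hwv hv
  have hgap : ∀ x, f x ≠ f v + 1 := by
    intro x hx
    by_cases hwx : K.Adj w x
    · exact absurd (hv x hwx) (by omega)
    · exact absurd (hf.1 x v (completeBipartiteGraph_adj_of_not_adj hwx hwv))
        (by rw [two_le_abs_natCast_sub_iff]; omega)
  have hvk : f v + 1 ≤ k := by
    have := two_le_abs_natCast_sub_iff.mp (hf.1 w v hwv)
    have := hw v
    have := hk w
    omega
  calc Fintype.card V + Fintype.card W = (Finset.univ : Finset (V ⊕ W)).card := by simp
    _ ≤ ((Finset.range (k + 1)).erase (f v + 1)).card :=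
      Finset.card_le_card_of_injOn f (fun u _ => by simp [hgap u, hk u])
        hf.injective_of_completeBipartiteGraph.injOn
    _ = k := by simp [Finset.card_erase_of_mem, hvk]

theorem lambdaNumber_completeBipartiteGraph :
    lambdaNumber (completeBipartiteGraph V W) = Fintype.card V + Fintype.card W := by
  obtain ⟨f, hf, hk⟩ := exists_isL21Labelling_completeBipartiteGraph (V := V) (W := W)
  exact le_antisymm (Nat.sInf_le ⟨f, hf, hk⟩)
    (le_csInf ⟨_, f, hf, hk⟩ fun _ ⟨_, hg, hgk⟩ => hg.card_add_card_le hgk)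

end CompleteBipartite

section ProdDomains

variable {R S : Type*} [CommRing R] [CommRing S] [IsDomain R] [IsDomain S]

lemma mem_zdVertices_prod_iff {x : R × S} :
    x ∈ zdVertices (R × S) ↔ (x.1 ≠ 0 ∧ x.2 = 0) ∨ (x.1 = 0 ∧ x.2 ≠ 0) := by
  constructor
  · rintro ⟨hx, y, hy, hxy⟩
    rw [Ne, Prod.ext_iff] at hx hy
    have h₁ : x.1 * y.1 = 0 := congrArg Prod.fst hxy
    have h₂ : x.2 * y.2 = 0 := congrArg Prod.snd hxy
    simp only [Prod.fst_zero, Prod.snd_zero, mul_eq_zero] at hx hy h₁ h₂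
    tauto
  · rintro (⟨h₁, h₂⟩ | ⟨h₁, h₂⟩)
    · exact ⟨fun h => h₁ (by simp [h]), (0, 1), by simp [Prod.ext_iff], by ext <;> simp [h₂]⟩
    · exact ⟨fun h => h₂ (by simp [h]), (1, 0), by simp [Prod.ext_iff], by ext <;> simp [h₁]⟩

def completeBipartiteToZdVertices :
    {a : R // a ≠ 0} ⊕ {b : S // b ≠ 0} → zdVertices (R × S) :=
  Sum.elim (fun a => ⟨(a, 0), mem_zdVertices_prod_iff.mpr (.inl ⟨a.2, rfl⟩)⟩)
    (fun b => ⟨(0, b), mem_zdVertices_prod_iff.mpr (.inr ⟨rfl, b.2⟩)⟩)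

lemma completeBipartiteToZdVertices_bijective :
    Function.Bijective (completeBipartiteToZdVertices (R := R) (S := S)) := by
  refine ⟨?_, fun ⟨x, hx⟩ => ?_⟩
  · rintro (⟨a, ha⟩ | ⟨b, hb⟩) (⟨a', ha'⟩ | ⟨b', hb'⟩) h <;>
      simp_all [completeBipartiteToZdVertices, Prod.ext_iff, Subtype.ext_iff]
  · rcases mem_zdVertices_prod_iff.mp hx with ⟨h₁, h₂⟩ | ⟨h₁, h₂⟩
    · exact ⟨.inl ⟨x.1, h₁⟩, by simp [completeBipartiteToZdVertices, Prod.ext_iff, h₂]⟩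
    · exact ⟨.inr ⟨x.2, h₂⟩, by simp [completeBipartiteToZdVertices, Prod.ext_iff, h₁]⟩

variable (R S) in
noncomputable def zdGraphProdIso :
    completeBipartiteGraph {a : R // a ≠ 0} {b : S // b ≠ 0} ≃g zdGraph (R × S) where
  toEquiv := .ofBijective _ completeBipartiteToZdVertices_bijective
  map_rel_iff' := by
    rintro (⟨a, ha⟩ | ⟨b, hb⟩) (⟨a', ha'⟩ | ⟨b', hb'⟩) <;>
      simp_all [zdGraph, completeBipartiteToZdVertices, Prod.ext_iff]

end ProdDomains

lemma Fintype.card_subtype_ne {α : Type*} [Fintype α] [DecidableEq α] (a : α) :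
    Fintype.card {x : α // x ≠ a} = Fintype.card α - 1 := by
  rw [Fintype.card_subtype_compl, Fintype.card_subtype_eq]

/-- `Γ(F_p × F_q) ≅ K_{p-1,q-1}` and `λ(Γ(F_p × F_q)) = p + q - 2`. -/
theorem zdGraph_prod_fields (F₁ F₂ : Type*) [Field F₁] [Field F₂] [Fintype F₁] [Fintype F₂]
    (p q : ℕ) (hp : Fintype.card F₁ = p) (hq : Fintype.card F₂ = q) :
    Nonempty (zdGraph (F₁ × F₂) ≃g completeBipartiteGraph (Fin (p - 1)) (Fin (q - 1))) ∧
    lambdaNumber (zdGraph (F₁ × F₂)) = p + q - 2 := by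
  classical
  have : Nonempty {a : F₁ // a ≠ 0} := ⟨⟨1, one_ne_zero⟩⟩
  have : Nonempty {b : F₂ // b ≠ 0} := ⟨⟨1, one_ne_zero⟩⟩
  have hp₁ : Fintype.card {a : F₁ // a ≠ 0} = p - 1 := hp ▸ Fintype.card_subtype_ne 0
  have hq₁ : Fintype.card {b : F₂ // b ≠ 0} = q - 1 := hq ▸ Fintype.card_subtype_ne 0
  have hp₂ : 2 ≤ p := hp ▸ Fintype.one_lt_card
  have hq₂ : 2 ≤ q := hq ▸ Fintype.one_lt_card
  let φ := zdGraphProdIso F₁ F₂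
  refine ⟨⟨φ.symm.trans (completeBipartiteGraphCongr (Fintype.equivFinOfCardEq hp₁)
    (Fintype.equivFinOfCardEq hq₁))⟩, ?_⟩
  rw [← lambdaNumber_congr φ, lambdaNumber_completeBipartiteGraph, hp₁, hq₁]
  omega
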